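/- arXiv:2505.14445 — 2 statements merged into one kernel-verified Lean document; each statement's English description precedes it below -/
import Mathlib

section
/- For n = 1 and d ≥ 2m+1: if v_0,...,v_m and w_0,...,w_m are vectors in a 2-dimensional vector space V with the v_i pairwise non-proportional and the w_j pairwise non-proportional, and Σ c_i v_i^d = Σ e_j w_j^d in Sym^d V with all c_i, e_j nonzero, then m' = m and after reordering each w_j is proportional to v_j. -/
open MvPolynomial

namespace Stmt6Aux

variable {k : Type} [Field k]

noncomputable def L (a : Fin 2 → k) : MvPolynomial (Fin 2) k :=
  C (a 0) * X 0 + C (a 1) * X 1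

lemma pderiv0_L (a : Fin 2 → k) : pderiv 0 (L a) = C (a 0) := by simp [L]
lemma pderiv1_L (a : Fin 2 → k) : pderiv 1 (L a) = C (a 1) := by simp [L]

lemma L_eq_zero {a : Fin 2 → k} (h : L a = 0) : a = 0 := by
  have h0 : (C (a 0) : MvPolynomial (Fin 2) k) = 0 := by rw [← pderiv0_L, h]; simp
  have h1 : (C (a 1) : MvPolynomial (Fin 2) k) = 0 := by rw [← pderiv1_L, h]; simp
  rw [C_eq_zero] at h0 h1
  funext i; fin_cases i <;> simpa

lemma L_ne_zero {a : Fin 2 → k} (h : a ≠ 0) : L a ≠ 0 := fun h' => h (L_eq_zero h')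

lemma L_smul (t : k) (a : Fin 2 → k) : L (t • a) = C t * L a := by
  simp [L, mul_comm, mul_assoc, mul_left_comm]; ring

noncomputable def Dop (u : Fin 2 → k) :
    MvPolynomial (Fin 2) k →ₗ[k] MvPolynomial (Fin 2) k :=
  u 1 • ((pderiv 0 : Derivation k (MvPolynomial (Fin 2) k) _)).toLinearMap
    - u 0 • ((pderiv 1 : Derivation k (MvPolynomial (Fin 2) k) _)).toLinearMap

lemma Dop_apply (u : Fin 2 → k) (p : MvPolynomial (Fin 2) k) :
    Dop u p = C (u 1) * pderiv 0 p - C (u 0) * pderiv 1 p := by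
  simp [Dop, smul_eq_C_mul]

lemma Dop_L_pow (u a : Fin 2 → k) (d : ℕ) :
    Dop u (L a ^ d) = C ((d : k) * (u 1 * a 0 - u 0 * a 1)) * L a ^ (d - 1) := by
  rw [Dop_apply, Derivation.leibniz_pow, Derivation.leibniz_pow, pderiv0_L, pderiv1_L]
  simp only [nsmul_eq_mul, smul_eq_mul, map_sub, map_mul, map_natCast]
  ring

lemma key [CharZero k] (d : ℕ) :
    ∀ {ι : Type} [DecidableEq ι] (s : Finset ι), s.card ≤ d + 1 →
    ∀ (v : ι → Fin 2 → k), (∀ i ∈ s, v i ≠ 0) →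
    (∀ i ∈ s, ∀ j ∈ s, i ≠ j → v i 0 * v j 1 - v j 0 * v i 1 ≠ 0) →
    ∀ (lam : ι → k), (∑ i ∈ s, C (lam i) * L (v i) ^ d) = 0 →
    ∀ i ∈ s, lam i = 0 := by
  induction d with
  | zero =>
    intro ι _ s hcard v _ _ lam hsum i0 hi0
    have hs : s = {i0} := by
      apply Finset.eq_singleton_iff_unique_mem.2
      exact ⟨hi0, fun b hb => Finset.card_le_one.mp hcard b hb i0 hi0⟩
    rw [hs] at hsum
    simp only [Finset.sum_singleton, pow_zero, mul_one] at hsum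
    exact C_eq_zero.mp hsum
  | succ d ih =>
    intro ι _ s hcard v hv0 hvdet lam hsum i0 hi0
    have hterm : ∀ i, Dop (v i0) (C (lam i) * L (v i) ^ (d + 1)) =
        C (lam i * (((d:k) + 1) * (v i0 1 * v i 0 - v i0 0 * v i 1))) * L (v i) ^ d := by
      intro i
      rw [← smul_eq_C_mul, map_smul, Dop_L_pow, smul_eq_C_mul]
      rw [← mul_assoc, ← map_mul]
      push_cast
      norm_num
    have h2 : ∑ i ∈ s.erase i0,
        C (lam i * (((d:k) + 1) * (v i0 1 * v i 0 - v i0 0 * v i 1))) * L (v i) ^ d = 0 := by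
      have h3 := congrArg (Dop (v i0)) hsum
      rw [map_sum, map_zero] at h3
      simp only [hterm] at h3
      rw [← Finset.add_sum_erase _ _ hi0] at h3
      rw [show v i0 1 * v i0 0 - v i0 0 * v i0 1 = 0 from by ring, mul_zero, mul_zero,
        map_zero, zero_mul, zero_add] at h3
      exact h3
    have hz : ∀ i ∈ s.erase i0, lam i = 0 := by
      intro i hi
      have hrec := ih (s.erase i0)
        (by have := Finset.card_erase_of_mem hi0; omega)
        v (fun a ha => hv0 a (Finset.mem_of_mem_erase ha))
        (fun a ha b hb hab => hvdet a (Finset.mem_of_mem_erase ha) b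
          (Finset.mem_of_mem_erase hb) hab)
        (fun i => lam i * (((d:k) + 1) * (v i0 1 * v i 0 - v i0 0 * v i 1))) h2 i hi
      have hne : ((d:k) + 1) ≠ 0 := by
        have : ((d+1 : ℕ) : k) ≠ 0 := Nat.cast_ne_zero.2 (Nat.succ_ne_zero d)
        push_cast at this; exact this
      have hdetne : v i0 1 * v i 0 - v i0 0 * v i 1 ≠ 0 := by
        have h4 := hvdet i0 hi0 i (Finset.mem_of_mem_erase hi) (Finset.ne_of_mem_erase hi).symm
        intro h5; apply h4; linear_combination -h5
      rcases mul_eq_zero.mp hrec with h | h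
      · exact h
      · exact absurd h (mul_ne_zero hne hdetne)
    rw [← Finset.add_sum_erase _ _ hi0, Finset.sum_eq_zero
      (fun i hi => by rw [hz i hi]; simp), add_zero] at hsum
    rcases mul_eq_zero.mp hsum with h | h
    · exact C_eq_zero.mp h
    · exact absurd h (pow_ne_zero _ (L_ne_zero (hv0 i0 hi0)))

lemma prop_of_det_eq_zero {a b : Fin 2 → k} (ha : a ≠ 0) (hb : b ≠ 0)
    (h : a 0 * b 1 - b 0 * a 1 = 0) : ∃ t : k, t ≠ 0 ∧ b = t • a := by
  by_cases h0 : a 0 = 0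
  · have h1 : a 1 ≠ 0 := by
      intro h1; exact ha (funext fun i => by fin_cases i <;> simp [h0, h1])
    have hb0 : b 0 = 0 := by
      have : b 0 * a 1 = 0 := by linear_combination h0 * b 1 - h
      rcases mul_eq_zero.mp this with h' | h'
      · exact h'
      · exact absurd h' h1
    have hb1 : b 1 ≠ 0 := by
      intro h'; exact hb (funext fun i => by fin_cases i <;> simp [hb0, h'])
    refine ⟨b 1 / a 1, div_ne_zero hb1 h1, funext fun i => ?_⟩
    fin_cases i <;> simp [hb0, h0] <;> field_simp
  · have ht : b 0 / a 0 ≠ 0 := by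
      intro h'
      have hb0 : b 0 = 0 := by
        field_simp at h'; simpa using h'
      have hb1 : b 1 = 0 := by
        have : a 0 * b 1 = 0 := by linear_combination h + hb0 * a 1
        rcases mul_eq_zero.mp this with h' | h'
        · exact absurd h' h0
        · exact h'
      exact hb (funext fun i => by fin_cases i <;> simp [hb0, hb1])
    refine ⟨b 0 / a 0, ht, funext fun i => ?_⟩
    fin_cases i <;> simp
    · field_simp
    · field_simp; linear_combination h

lemma det_ne_zero_of_indep {a b : Fin 2 → k} (h : LinearIndependent k ![a, b]) :
    a 0 * b 1 - b 0 * a 1 ≠ 0 := by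
  intro hdet
  have ha : a ≠ 0 := by have := h.ne_zero 0; simpa using this
  have hb : b ≠ 0 := by have := h.ne_zero 1; simpa using this
  obtain ⟨t, ht, rfl⟩ := prop_of_det_eq_zero ha hb hdet
  rw [LinearIndependent.pair_iff] at h
  have := (h t (-1) (by simp)).2
  norm_num at this

end Stmt6Aux

open Stmt6Aux

/-- Uniqueness in the Waring problem for binary forms: if `d ≥ 2m+1` and `d ≥ 2m'+1`,
and `Σ c_i ℓ_{v_i}^d = Σ e_j ℓ_{w_j}^d` where the `v_i` are pairwise non-proportional,
the `w_j` are pairwise non-proportional, and all coefficients are nonzero, then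
`m' = m` and after reordering each `w_j` is proportional to the matching `v_j`.
(Here `ℓ_v = v₀ X₀ + v₁ X₁` represents `v^d ∈ Sym^d V` for `v ∈ V = k²`.) -/
theorem stmt_6 {k : Type} [Field k] [IsAlgClosed k] [CharZero k]
    (m m' d : ℕ) (hd : 2 * m + 1 ≤ d) (hd' : 2 * m' + 1 ≤ d)
    (v : Fin (m + 1) → Fin 2 → k) (w : Fin (m' + 1) → Fin 2 → k)
    (hv : ∀ i j, i ≠ j → LinearIndependent k ![v i, v j])
    (hw : ∀ i j, i ≠ j → LinearIndependent k ![w i, w j])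
    (c : Fin (m + 1) → k) (e : Fin (m' + 1) → k)
    (hc : ∀ i, c i ≠ 0) (he : ∀ j, e j ≠ 0)
    (heq : ∑ i, C (c i) * (C (v i 0) * X 0 + C (v i 1) * X 1 : MvPolynomial (Fin 2) k) ^ d
         = ∑ j, C (e j) * (C (w j 0) * X 0 + C (w j 1) * X 1) ^ d) :
    m' = m ∧ ∃ π : Fin (m' + 1) ≃ Fin (m + 1),
      ∀ j, ∃ t : k, t ≠ 0 ∧ w j = t • v (π j) := by
  classical
  have heqL : ∑ i, C (c i) * L (v i) ^ d = ∑ j, C (e j) * L (w j) ^ d := heq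
  have hd1 : d ≠ 0 := by omega
  -- if some v i = 0 then m = 0, similarly for w
  have hvz : (∃ i, v i = 0) → m = 0 := by
    rintro ⟨i, hi⟩
    by_contra hm
    have hj : ∃ j : Fin (m + 1), i ≠ j := by
      by_cases h0 : (i : ℕ) = 0
      · refine ⟨⟨1, by omega⟩, fun h => ?_⟩
        have h2 : (i : ℕ) = 1 := congrArg Fin.val h
        omega
      · refine ⟨⟨0, by omega⟩, fun h => ?_⟩
        have h2 : (i : ℕ) = 0 := congrArg Fin.val h
        omega
    obtain ⟨j, hij⟩ := hj
    have := (hv i j hij).ne_zero 0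
    simp only [Matrix.cons_val_zero] at this
    exact this hi
  have hwz : (∃ j, w j = 0) → m' = 0 := by
    rintro ⟨i, hi⟩
    by_contra hm
    have hj : ∃ j : Fin (m' + 1), i ≠ j := by
      by_cases h0 : (i : ℕ) = 0
      · refine ⟨⟨1, by omega⟩, fun h => ?_⟩
        have h2 : (i : ℕ) = 1 := congrArg Fin.val h
        omega
      · refine ⟨⟨0, by omega⟩, fun h => ?_⟩
        have h2 : (i : ℕ) = 0 := congrArg Fin.val h
        omega
    obtain ⟨j, hij⟩ := hj
    have := (hw i j hij).ne_zero 0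
    simp only [Matrix.cons_val_zero] at this
    exact this hi
  by_cases hA : ∃ i, v i = 0
  · -- degenerate case: v has a zero vector, so m = 0 and everything vanishes
    have hm0 : m = 0 := hvz hA
    subst hm0
    haveI : Subsingleton (Fin (0 + 1)) := ⟨fun a b => Fin.ext (by omega)⟩
    obtain ⟨i, hi⟩ := hA
    have hi0 : v 0 = 0 := by rwa [Subsingleton.elim (0 : Fin (0 + 1)) i]
    have hLHS : ∑ i, C (c i) * L (v i) ^ d = (0 : MvPolynomial (Fin 2) k) := by
      rw [Fin.sum_univ_one, hi0]
      simp [L, zero_pow hd1]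
    have hRHS : ∑ j, C (e j) * L (w j) ^ d = (0 : MvPolynomial (Fin 2) k) := by
      rw [← heqL, hLHS]
    by_cases hB : ∃ j, w j = 0
    · have hm'0 : m' = 0 := hwz hB
      subst hm'0
      haveI : Subsingleton (Fin (0 + 1)) := ⟨fun a b => Fin.ext (by omega)⟩
      obtain ⟨j, hj⟩ := hB
      refine ⟨rfl, Equiv.refl _, fun j' => ⟨1, one_ne_zero, ?_⟩⟩
      rw [Subsingleton.elim j' j, hj, Subsingleton.elim ((Equiv.refl (Fin (0+1))) j) (0 : Fin (0+1)), hi0]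
      simp
    · exfalso
      push_neg at hB
      have := key d Finset.univ
        (by simp only [Finset.card_univ, Fintype.card_fin]; omega) w
        (fun j _ => hB j)
        (fun a _ b _ hab => det_ne_zero_of_indep (hw a b hab)) e hRHS 0 (Finset.mem_univ _)
      exact he 0 this
  · by_cases hB : ∃ j, w j = 0
    · exfalso
      have hm'0 : m' = 0 := hwz hB
      subst hm'0
      haveI : Subsingleton (Fin (0 + 1)) := ⟨fun a b => Fin.ext (by omega)⟩
      obtain ⟨j, hj⟩ := hB
      have hj0 : w 0 = 0 := by rwa [Subsingleton.elim (0 : Fin (0 + 1)) j]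
      have hRHS : ∑ j, C (e j) * L (w j) ^ d = (0 : MvPolynomial (Fin 2) k) := by
        rw [Fin.sum_univ_one, hj0]
        simp [L, zero_pow hd1]
      have hLHS : ∑ i, C (c i) * L (v i) ^ d = (0 : MvPolynomial (Fin 2) k) := by
        rw [heqL, hRHS]
      push_neg at hA
      have := key d Finset.univ
        (by simp only [Finset.card_univ, Fintype.card_fin]; omega) v
        (fun i _ => hA i)
        (fun a _ b _ hab => det_ne_zero_of_indep (hv a b hab)) c hLHS 0 (Finset.mem_univ _)
      exact hc 0 this
    · -- main case
      push_neg at hA hB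
      set P : Fin (m' + 1) → Fin (m + 1) → Prop :=
        fun j i => ∃ t : k, t ≠ 0 ∧ w j = t • v i with hPdef
      have hsig : ∀ j : Fin (m' + 1), ∃ (i : Fin (m + 1)) (t : k),
          (∃ i', P j i') → (t ≠ 0 ∧ w j = t • v i) := by
        intro j
        by_cases h : ∃ i', P j i'
        · obtain ⟨i, t, ht, hwj⟩ := h
          exact ⟨i, t, fun _ => ⟨ht, hwj⟩⟩
        · exact ⟨0, 0, fun h' => absurd h' h⟩
      choose σ τ hστ using hsig
      set S : Finset (Fin (m' + 1)) := Finset.univ.filter (fun j => ∃ i, P j i) with hSdef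
      set u : (Fin (m + 1) ⊕ Fin (m' + 1)) → Fin 2 → k := Sum.elim v w with hudef
      set s : Finset (Fin (m + 1) ⊕ Fin (m' + 1)) :=
        Finset.univ.image Sum.inl ∪
          (Finset.univ.filter (fun j => ¬∃ i, P j i)).image Sum.inr with hsdef
      set lam : (Fin (m + 1) ⊕ Fin (m' + 1)) → k :=
        Sum.elim (fun i => c i - ∑ j ∈ S.filter (fun j => σ j = i), e j * τ j ^ d)
          (fun j => - e j) with hlamdef
      -- the grouped sum identity
      have hterm : ∀ j ∈ S, C (e j) * L (w j) ^ d
          = C (e j * τ j ^ d) * L (v (σ j)) ^ d := by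
        intro j hj
        have hjS : ∃ i', P j i' := by
          simpa [hSdef] using hj
        obtain ⟨ht, hwj⟩ := hστ j hjS
        rw [hwj, L_smul, mul_pow, ← map_pow, ← mul_assoc, ← map_mul]
      have hgroup : ∑ j ∈ S, C (e j) * L (w j) ^ d
          = ∑ i : Fin (m + 1), ∑ j ∈ S.filter (fun j => σ j = i),
              C (e j * τ j ^ d) * L (v (σ j)) ^ d := by
        rw [Finset.sum_fiberwise_of_maps_to (fun j _ => Finset.mem_univ (σ j))]
        exact Finset.sum_congr rfl hterm
      have gpull : ∑ i : Fin (m + 1),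
            C (∑ j ∈ S.filter (fun j => σ j = i), e j * τ j ^ d) * L (v i) ^ d
          = ∑ j ∈ S, C (e j) * L (w j) ^ d := by
        rw [hgroup]
        refine Finset.sum_congr rfl fun i _ => ?_
        rw [map_sum, Finset.sum_mul]
        refine Finset.sum_congr rfl fun j hj => ?_
        rw [(Finset.mem_filter.mp hj).2]
      have hdisj : Disjoint (Finset.univ.image (Sum.inl : Fin (m+1) → _))
          ((Finset.univ.filter (fun j => ¬∃ i, P j i)).image Sum.inr) := by
        rw [Finset.disjoint_left]
        rintro x hx hy
        obtain ⟨i, _, rfl⟩ := Finset.mem_image.mp hx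
        obtain ⟨j, _, hj⟩ := Finset.mem_image.mp hy
        exact absurd hj (by simp)
      have hsplit := Finset.sum_filter_add_sum_filter_not Finset.univ
        (fun j => ∃ i, P j i) (fun j => C (e j) * L (w j) ^ d)
      have h1 : ∑ x ∈ s, C (lam x) * L (u x) ^ d
          = (∑ i : Fin (m + 1), C (c i - ∑ j ∈ S.filter (fun j => σ j = i), e j * τ j ^ d)
              * L (v i) ^ d)
            + ∑ j ∈ Finset.univ.filter (fun j => ¬∃ i, P j i),
                - (C (e j) * L (w j) ^ d) := by
        rw [hsdef, Finset.sum_union hdisj,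
          Finset.sum_image (fun a _ b _ h => Sum.inl.inj h),
          Finset.sum_image (fun a _ b _ h => Sum.inr.inj h)]
        simp only [hudef, hlamdef, Sum.elim_inl, Sum.elim_inr, map_neg, neg_mul]
      have hA2 : ∀ i : Fin (m + 1),
          C (c i - ∑ j ∈ S.filter (fun j => σ j = i), e j * τ j ^ d) * L (v i) ^ d
          = C (c i) * L (v i) ^ d
            - C (∑ j ∈ S.filter (fun j => σ j = i), e j * τ j ^ d) * L (v i) ^ d := by
        intro i; rw [map_sub, sub_mul]
      have hkey_sum : ∑ x ∈ s, C (lam x) * L (u x) ^ d = 0 := by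
        rw [h1]
        simp only [hA2]
        rw [Finset.sum_sub_distrib, Finset.sum_neg_distrib, gpull]
        linear_combination heqL - hsplit
      -- apply the key lemma
      have hcard : s.card ≤ d + 1 := by
        calc s.card ≤ (Finset.univ.image (Sum.inl : Fin (m+1) → _)).card
              + ((Finset.univ.filter (fun j => ¬∃ i, P j i)).image Sum.inr).card :=
              Finset.card_union_le _ _
          _ ≤ (m + 1) + (m' + 1) := by
              have h3 : (Finset.univ.image (Sum.inl : Fin (m+1) → Fin (m+1) ⊕ Fin (m'+1))).card ≤ m + 1 :=
                le_trans Finset.card_image_le (le_of_eq (by simp))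
              have h4 : ((Finset.univ.filter (fun j => ¬∃ i, P j i)).image
                  (Sum.inr : Fin (m'+1) → Fin (m+1) ⊕ Fin (m'+1))).card ≤ m' + 1 :=
                le_trans Finset.card_image_le
                  (le_trans (Finset.card_filter_le _ _) (le_of_eq (by simp)))
              exact add_le_add h3 h4
          _ ≤ d + 1 := by omega
      have hnz : ∀ x ∈ s, u x ≠ 0 := by
        rintro (i | j) _
        · exact hA i
        · exact hB j
      have hdet : ∀ x ∈ s, ∀ y ∈ s, x ≠ y → u x 0 * u y 1 - u y 0 * u x 1 ≠ 0 := by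
        rintro (i | j) hx (i' | j') hy hne
        · exact det_ne_zero_of_indep (hv i i' (fun h => hne (by rw [h])))
        · -- inl i, inr j'
          have hj' : ¬∃ i0, P j' i0 := by
            rcases Finset.mem_union.mp hy with h | h
            · obtain ⟨a, _, ha⟩ := Finset.mem_image.mp h; exact absurd ha (by simp)
            · obtain ⟨a, haf, ha⟩ := Finset.mem_image.mp h
              obtain rfl : a = j' := Sum.inr.inj ha
              exact (Finset.mem_filter.mp haf).2
          intro hdet0
          obtain ⟨t, ht, hprop⟩ := prop_of_det_eq_zero (hA i) (hB j') hdet0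
          exact hj' ⟨i, t, ht, hprop⟩
        · -- inr j, inl i'
          have hj' : ¬∃ i0, P j i0 := by
            rcases Finset.mem_union.mp hx with h | h
            · obtain ⟨a, _, ha⟩ := Finset.mem_image.mp h; exact absurd ha (by simp)
            · obtain ⟨a, haf, ha⟩ := Finset.mem_image.mp h
              obtain rfl : a = j := Sum.inr.inj ha
              exact (Finset.mem_filter.mp haf).2
          intro hdet0
          obtain ⟨t, ht, hprop⟩ := prop_of_det_eq_zero (hB j) (hA i') hdet0
          refine hj' ⟨i', t⁻¹, inv_ne_zero ht, ?_⟩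
          rw [hprop, inv_smul_smul₀ ht]
        · exact det_ne_zero_of_indep (hw j j' (fun h => hne (by rw [h])))
      have hz := key d s hcard u hnz hdet lam hkey_sum
      -- every w j is proportional to some v i
      have hP : ∀ j, ∃ i, P j i := by
        intro j
        by_contra hnj
        have hmem : Sum.inr j ∈ s := by
          rw [hsdef]
          exact Finset.mem_union_right _ (Finset.mem_image.mpr
            ⟨j, Finset.mem_filter.mpr ⟨Finset.mem_univ _, hnj⟩, rfl⟩)
        have h0 := hz (Sum.inr j) hmem
        simp only [hlamdef, Sum.elim_inr, neg_eq_zero] at h0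
        exact he j h0
      have hgood : ∀ j, τ j ≠ 0 ∧ w j = τ j • v (σ j) := fun j => hστ j (hP j)
      have hσinj : Function.Injective σ := by
        intro j j' hjj'
        by_contra hne
        have hd0 : w j 0 * w j' 1 - w j' 0 * w j 1 = 0 := by
          obtain ⟨_, h1'⟩ := hgood j
          obtain ⟨_, h2'⟩ := hgood j'
          rw [h1', h2', hjj']
          simp only [Pi.smul_apply, smul_eq_mul]
          ring
        exact det_ne_zero_of_indep (hw j j' hne) hd0
      have hσsurj : Function.Surjective σ := by
        intro i
        by_contra hni
        push_neg at hni
        have hmem : Sum.inl i ∈ s := by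
          rw [hsdef]
          exact Finset.mem_union_left _ (Finset.mem_image.mpr ⟨i, Finset.mem_univ _, rfl⟩)
        have h0 := hz (Sum.inl i) hmem
        simp only [hlamdef, Sum.elim_inl] at h0
        have hempty : S.filter (fun j => σ j = i) = ∅ :=
          Finset.filter_eq_empty_iff.mpr (fun j _ => hni j)
        rw [hempty, Finset.sum_empty, sub_zero] at h0
        exact hc i h0
      have hbij : Function.Bijective σ := ⟨hσinj, hσsurj⟩
      have hmm : m' = m := by
        have := Fintype.card_of_bijective hbij
        simp only [Fintype.card_fin] at this
        omega
      exact ⟨hmm, Equiv.ofBijective σ hbij, fun j => ⟨τ j, (hgood j).1, (hgood j).2⟩⟩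
end

section
/- For the central charge Z(E) = (χ'(E), χ(E)) on P^n, Z(O_{P^n}(−i)[i]) has argument 1 (i.e., lies on the negative real axis or ray arg = 1) for all i = 1,...,n: concretely, χ(O_{P^n}(−i)) = 0 and (−1)^i χ'(O_{P^n}(−i)) < 0 for 1 ≤ i ≤ n. -/
open Polynomial

/-- For `1 ≤ i ≤ n` and the Hilbert polynomial `P(t) = Π_{j=1}^n (t−i+j)/j` of
`O_{P^n}(−i)`, one has `χ(O(−i)) = P(0) = 0` and `(−1)^i χ'(O(−i)) = (−1)^i P'(0) < 0`;
hence `Z(O_{P^n}(−i)[i]) = (−1)^i (P'(0), P(0))` lies on the ray of argument `1`. -/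
theorem stmt_11 (n i : ℕ) (h1 : 1 ≤ i) (h2 : i ≤ n) :
    let P : Polynomial ℚ := ∏ j ∈ Finset.Icc 1 n, (C (1 / (j : ℚ)) * (X + C ((j : ℚ) - i)))
    P.eval 0 = 0 ∧ (-1 : ℚ) ^ i * P.derivative.eval 0 < 0 := by
  intro P
  set f : ℕ → Polynomial ℚ := fun j => C (1 / (j : ℚ)) * (X + C ((j : ℚ) - i)) with hf
  have hi : i ∈ Finset.Icc 1 n := Finset.mem_Icc.mpr ⟨h1, h2⟩
  have hP : P = f i * ∏ j ∈ (Finset.Icc 1 n).erase i, f j :=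
    (Finset.mul_prod_erase _ f hi).symm
  have hfi0 : (f i).eval 0 = 0 := by simp [hf]
  set Q := ∏ j ∈ (Finset.Icc 1 n).erase i, f j with hQ
  have hsplit : (Finset.Icc 1 n).erase i = Finset.Icc 1 (i-1) ∪ Finset.Icc (i+1) n := by
    ext j
    simp only [Finset.mem_erase, Finset.mem_Icc, Finset.mem_union]
    omega
  have hdisj : Disjoint (Finset.Icc 1 (i-1)) (Finset.Icc (i+1) n) := by
    rw [Finset.disjoint_left]
    intro a ha hb
    simp only [Finset.mem_Icc] at ha hb
    omega
  have hQ0 : Q.eval 0 = (∏ j ∈ Finset.Icc 1 (i-1), (((j:ℚ) - i)/j)) *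
      (∏ j ∈ Finset.Icc (i+1) n, (((j:ℚ) - i)/j)) := by
    rw [hQ, hsplit, Finset.prod_union hdisj, eval_mul, eval_prod, eval_prod]
    congr 1 <;>
      · apply Finset.prod_congr rfl
        intro j hj
        simp only [hf, eval_mul, eval_C, eval_add, eval_X]
        ring
  have hB : (0:ℚ) < ∏ j ∈ Finset.Icc (i+1) n, (((j:ℚ) - i)/j) := by
    apply Finset.prod_pos
    intro j hj
    simp only [Finset.mem_Icc] at hj
    have ha : (0:ℚ) < (j:ℚ) - i := by
      have : (i:ℚ) < j := by exact_mod_cast Nat.lt_of_lt_of_le (Nat.lt_succ_self i) hj.1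
      linarith
    have hb : (0:ℚ) < (j:ℚ) := by
      have : 0 < j := by omega
      exact_mod_cast this
    exact div_pos ha hb
  have hApos : (0:ℚ) < ∏ j ∈ Finset.Icc 1 (i-1), (((i:ℚ) - j)/j) := by
    apply Finset.prod_pos
    intro j hj
    simp only [Finset.mem_Icc] at hj
    have ha : (0:ℚ) < (i:ℚ) - j := by
      have : (j:ℚ) < i := by exact_mod_cast (by omega : j < i)
      linarith
    have hb : (0:ℚ) < (j:ℚ) := by
      have : 0 < j := hj.1
      exact_mod_cast this
    exact div_pos ha hb
  have hA : (∏ j ∈ Finset.Icc 1 (i-1), (((j:ℚ) - i)/j)) =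
      (-1:ℚ)^(i-1) * ∏ j ∈ Finset.Icc 1 (i-1), (((i:ℚ) - j)/j) := by
    calc (∏ j ∈ Finset.Icc 1 (i-1), (((j:ℚ) - i)/j))
        = ∏ j ∈ Finset.Icc 1 (i-1), ((-1:ℚ) * (((i:ℚ) - j)/j)) := by
          apply Finset.prod_congr rfl
          intro j hj
          ring
      _ = (∏ _j ∈ Finset.Icc 1 (i-1), (-1:ℚ)) *
            ∏ j ∈ Finset.Icc 1 (i-1), (((i:ℚ) - j)/j) := Finset.prod_mul_distrib
      _ = (-1:ℚ)^(i-1) * ∏ j ∈ Finset.Icc 1 (i-1), (((i:ℚ) - j)/j) := by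
          rw [Finset.prod_const, Nat.card_Icc]
          congr 2
  have hP'0 : P.derivative.eval 0 = (1/(i:ℚ)) * Q.eval 0 := by
    rw [hP, derivative_mul, eval_add, eval_mul, eval_mul, hfi0]
    simp [hf]
  constructor
  · rw [hP, eval_mul, hfi0, zero_mul]
  · rw [hP'0, hQ0, hA]
    have key : (-1:ℚ)^i * (-1:ℚ)^(i-1) = -1 := by
      rw [← pow_add]
      have : i + (i-1) = 2*(i-1) + 1 := by omega
      rw [this, pow_succ, pow_mul]
      norm_num
    have hipos : (0:ℚ) < 1/(i:ℚ) := by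
      have : 0 < i := h1
      have : (0:ℚ) < (i:ℚ) := by exact_mod_cast this
      positivity
    have hrw : (-1:ℚ)^i * ((1/(i:ℚ)) * ((-1:ℚ)^(i-1) *
          (∏ j ∈ Finset.Icc 1 (i-1), (((i:ℚ) - j)/j)) *
          (∏ j ∈ Finset.Icc (i+1) n, (((j:ℚ) - i)/j)))) =
        ((-1:ℚ)^i * (-1:ℚ)^(i-1)) * ((1/(i:ℚ)) *
          ((∏ j ∈ Finset.Icc 1 (i-1), (((i:ℚ) - j)/j)) *
          (∏ j ∈ Finset.Icc (i+1) n, (((j:ℚ) - i)/j)))) := by ring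
    rw [hrw, key]
    have := mul_pos hipos (mul_pos hApos hB)
    linarith
end
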